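/- Let E and E' be real Hilbert spaces, X ⊆ E and Y ⊆ E' nonempty closed convex sets each of diameter at most D, and F : E × E' → ℝ a differentiable function that is convex-concave on X × Y, with saddle operator G(x,y) = (∇_x F(x,y), −∇_y F(x,y)). Assume G is monotone and ℓ-Lipschitz on X × Y. Let T ≥ 1, set α = 1/ℓ, fix z₀ ∈ X × Y, and define the Extragradient iterates z_{t+1/2} = Π_{X×Y}(z_t − α·G(z_t)) and z_{t+1} = Π_{X×Y}(z_t − α·G(z_{t+1/2})) for t = 0, …, T−1. Let (x̄_{T+1/2}, ȳ_{T+1/2}) = (1/T)·Σ_{t=0}^{T−1} z_{t+1/2}. Then F(x̄_{T+1/2}, y) − F(x, ȳ_{T+1/2}) ≤ ℓD²/T for every (x, y) ∈ X × Y. -/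

import Mathlib

open RealInnerProductSpace

noncomputable section

variable {E E' : Type*} [NormedAddCommGroup E] [InnerProductSpace ℝ E] [CompleteSpace E]
  [NormedAddCommGroup E'] [InnerProductSpace ℝ E'] [CompleteSpace E']

/-- The saddle operator `G(x,y) = (∇ₓ F(x,y), −∇_y F(x,y))` on the Hilbert product
`WithLp 2 (E × E')`. -/
def saddleOp (F : E × E' → ℝ) (z : WithLp 2 (E × E')) : WithLp 2 (E × E') :=
  (WithLp.equiv 2 (E × E')).symm
    (gradient (fun u => F (u, (WithLp.equiv 2 (E × E') z).2)) (WithLp.equiv 2 (E × E') z).1,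
     -gradient (fun v => F ((WithLp.equiv 2 (E × E') z).1, v)) (WithLp.equiv 2 (E × E') z).2)

/-- `X × Y` as a subset of the Hilbert product. -/
def prodSet (X : Set E) (Y : Set E') : Set (WithLp 2 (E × E')) :=
  (WithLp.equiv 2 (E × E')) ⁻¹' (X ×ˢ Y)

/-- `p` is the metric projection of `v` onto `S`. -/
def IsProjOn {H : Type*} [NormedAddCommGroup H] (S : Set H) (v p : H) : Prop :=
  p ∈ S ∧ ∀ w ∈ S, ‖v - p‖ ≤ ‖v - w‖

/-!
Each extragradient step consists of two projections. Their variational inequalities, together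
with the Lipschitz bound `α ‖G w_t - G z_t‖ ≤ ‖w_t - z_t‖` and the three-point identity for
`⟪a - b, b - c⟫`, give `2α ⟪G w_t, w_t - u⟫ ≤ ‖z_t - u‖² - ‖z_{t+1} - u‖²`, which telescopes.
By the first-order conditions of convexity in `x` and concavity in `y`, the gap
`F(w_t.1, y) - F(x, w_t.2)` is at most `⟪G w_t, w_t - u⟫` for `u = (x, y)`, and Jensen's
inequality passes this bound to the average of the `w_t`.
-/

section Projection

variable {H : Type*} [NormedAddCommGroup H] [InnerProductSpace ℝ H]

lemma IsProjOn.inner_sub_le_zero {S : Set H} (hS : Convex ℝ S) {v p : H}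
    (h : IsProjOn S v p) {u : H} (hu : u ∈ S) : ⟪v - p, u - p⟫ ≤ 0 := by
  have : Nonempty S := ⟨⟨p, h.1⟩⟩
  refine (norm_eq_iInf_iff_real_inner_le_zero hS h.1).mp ?_ u hu
  have hbdd : BddBelow (Set.range fun w : S => ‖v - w‖) :=
    ⟨0, by rintro _ ⟨w, rfl⟩; exact norm_nonneg _⟩
  exact le_antisymm (le_ciInf fun w => h.2 w w.2) (ciInf_le hbdd ⟨p, h.1⟩)

lemma IsProjOn.smul_inner_le {S : Set H} (hS : Convex ℝ S) {a g p : H} {α : ℝ}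
    (h : IsProjOn S (a - α • g) p) {u : H} (hu : u ∈ S) :
    α * ⟪g, p - u⟫ ≤ ⟪a - p, p - u⟫ := by
  have key := h.inner_sub_le_zero hS hu
  rw [show a - α • g - p = (a - p) - α • g by abel, inner_sub_left, real_inner_smul_left,
    ← neg_sub p u, inner_neg_right, inner_neg_right] at key
  linarith

lemma two_mul_inner_sub_sub (a b c : H) :
    2 * ⟪a - b, b - c⟫ = ‖a - c‖ ^ 2 - ‖a - b‖ ^ 2 - ‖b - c‖ ^ 2 := by
  rw [show a - c = (a - b) + (b - c) by abel, norm_add_sq_real]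
  ring

end Projection

section Extragradient

variable {H : Type*} [NormedAddCommGroup H] [InnerProductSpace ℝ H]
  {S : Set H} {G : H → H} {ℓ α : ℝ}

lemma extragradient_step_inner_le (hS : Convex ℝ S) (hα : 0 ≤ α) (hαℓ : α * ℓ ≤ 1)
    (hlip : ∀ z₁ ∈ S, ∀ z₂ ∈ S, ‖G z₁ - G z₂‖ ≤ ℓ * ‖z₁ - z₂‖)
    {a b c u : H} (ha : a ∈ S) (hb : IsProjOn S (a - α • G a) b)
    (hc : IsProjOn S (a - α • G b) c) (hu : u ∈ S) :
    2 * α * ⟪G b, b - u⟫ ≤ ‖a - u‖ ^ 2 - ‖c - u‖ ^ 2 := by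
  have hproj_c := hc.smul_inner_le hS hu
  have hproj_b := hb.smul_inner_le hS hc.1
  have hsplit : ⟪G b, b - u⟫ = ⟪G a, b - c⟫ + ⟪G b - G a, b - c⟫ + ⟪G b, c - u⟫ := by
    rw [show b - u = (b - c) + (c - u) by abel, inner_add_right, inner_sub_left]
    ring
  have hlip_ab : α * ⟪G b - G a, b - c⟫ ≤ ‖a - b‖ * ‖b - c‖ :=
    calc α * ⟪G b - G a, b - c⟫ ≤ α * (ℓ * ‖b - a‖ * ‖b - c‖) := by
          gcongr
          exact (real_inner_le_norm _ _).trans (by gcongr; exact hlip b hb.1 a ha)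
      _ = (α * ℓ) * (‖a - b‖ * ‖b - c‖) := by rw [norm_sub_rev]; ring
      _ ≤ ‖a - b‖ * ‖b - c‖ := mul_le_of_le_one_left (by positivity) hαℓ
  have hid_c := two_mul_inner_sub_sub a c u
  have hid_b := two_mul_inner_sub_sub a b c
  have hamgm := two_mul_le_add_sq ‖a - b‖ ‖b - c‖
  rw [hsplit]
  linarith

lemma extragradient_sum_inner_le (hS : Convex ℝ S) (hα : 0 ≤ α) (hαℓ : α * ℓ ≤ 1)
    (hlip : ∀ z₁ ∈ S, ∀ z₂ ∈ S, ‖G z₁ - G z₂‖ ≤ ℓ * ‖z₁ - z₂‖)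
    {T : ℕ} {z w : ℕ → H} (hz0 : z 0 ∈ S)
    (hhalf : ∀ t < T, IsProjOn S (z t - α • G (z t)) (w t))
    (hfull : ∀ t < T, IsProjOn S (z t - α • G (w t)) (z (t + 1))) {u : H} (hu : u ∈ S) :
    2 * α * ∑ t ∈ Finset.range T, ⟪G (w t), w t - u⟫ ≤ ‖z 0 - u‖ ^ 2 := by
  have hzS : ∀ t < T, z t ∈ S := by
    rintro (_ | t) ht
    exacts [hz0, (hfull t (by omega)).1]
  have htele : 2 * α * ∑ t ∈ Finset.range T, ⟪G (w t), w t - u⟫ ≤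
      ∑ t ∈ Finset.range T, (‖z t - u‖ ^ 2 - ‖z (t + 1) - u‖ ^ 2) := by
    rw [Finset.mul_sum]
    refine Finset.sum_le_sum fun t ht => ?_
    have ht := Finset.mem_range.mp ht
    exact extragradient_step_inner_le hS hα hαℓ hlip (hzS t ht) (hhalf t ht) (hfull t ht) hu
  rw [Finset.sum_range_sub'] at htele
  linarith [sq_nonneg ‖z T - u‖]

end Extragradient

section Gradient

variable {H : Type*} [NormedAddCommGroup H] [InnerProductSpace ℝ H] [CompleteSpace H]
  {X : Set H} {f : H → ℝ} {g p u : H}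

lemma ConvexOn.inner_gradient_le (hf : ConvexOn ℝ X f) (hp : p ∈ X) (hu : u ∈ X)
    (hg : HasGradientAt f g p) : ⟪g, u - p⟫ ≤ f u - f p := by
  let L : ℝ →ᵃ[ℝ] H := AffineMap.lineMap p u
  have hφ : ConvexOn ℝ (L ⁻¹' X) (f ∘ L) := hf.comp_affineMap L
  have hderiv : HasDerivAt (f ∘ L) ⟪g, u - p⟫ 0 := by
    have := hg.hasFDerivAt.comp_hasDerivAt_of_eq (0 : ℝ) AffineMap.hasDerivAt_lineMap
      (AffineMap.lineMap_apply_zero p u).symm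
    simpa using this
  have hL0 : L 0 = p := AffineMap.lineMap_apply_zero p u
  have hL1 : L 1 = u := AffineMap.lineMap_apply_one p u
  have := hφ.le_slope_of_hasDerivAt (by simpa [hL0]) (by simpa [hL1]) zero_lt_one hderiv
  simpa [slope_def_field, hL0, hL1] using this

lemma ConcaveOn.inner_gradient_ge (hf : ConcaveOn ℝ X f) (hp : p ∈ X) (hu : u ∈ X)
    (hg : HasGradientAt f g p) : f u - f p ≤ ⟪g, u - p⟫ := by
  have hneg : HasGradientAt (-f) (-g) p := by
    rw [hasGradientAt_iff_hasFDerivAt, map_neg]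
    exact hg.hasFDerivAt.neg
  have := hf.neg.inner_gradient_le hp hu hneg
  simp only [inner_neg_left, Pi.neg_apply] at this
  linarith

end Gradient

lemma WithLp.prod_norm_sq_le_two_mul_sq {A B : Type*} [SeminormedAddCommGroup A]
    [SeminormedAddCommGroup B] {v : WithLp 2 (A × B)} {D : ℝ} (h₁ : ‖v.fst‖ ≤ D)
    (h₂ : ‖v.snd‖ ≤ D) : ‖v‖ ^ 2 ≤ 2 * D ^ 2 := by
  rw [WithLp.prod_norm_sq_eq_of_L2]
  nlinarith [norm_nonneg v.fst, norm_nonneg v.snd]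

def saddleGap (F : E × E' → ℝ) (z u : WithLp 2 (E × E')) : ℝ :=
  F (z.fst, u.snd) - F (u.fst, z.snd)

section Saddle

variable {X : Set E} {Y : Set E'} {F : E × E' → ℝ}

omit [CompleteSpace E] [CompleteSpace E'] in
lemma convex_prodSet (hX : Convex ℝ X) (hY : Convex ℝ Y) : Convex ℝ (prodSet X Y) :=
  (hX.prod hY).linear_preimage (WithLp.linearEquiv 2 ℝ (E × E')).toLinearMap

lemma saddleGap_le_inner_saddleOp (hcvx : ∀ y ∈ Y, ConvexOn ℝ X (fun x => F (x, y)))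
    (hccv : ∀ x ∈ X, ConcaveOn ℝ Y (fun y => F (x, y))) {z u : WithLp 2 (E × E')}
    (hF : DifferentiableAt ℝ F (WithLp.ofLp z)) (hz : z ∈ prodSet X Y) (hu : u ∈ prodSet X Y) :
    saddleGap F z u ≤ ⟪saddleOp F z, z - u⟫ := by
  obtain ⟨hzX, hzY⟩ : z.fst ∈ X ∧ z.snd ∈ Y := hz
  obtain ⟨huX, huY⟩ : u.fst ∈ X ∧ u.snd ∈ Y := hu
  have hx : DifferentiableAt ℝ (fun x => F (x, z.snd)) z.fst :=
    hF.comp z.fst (differentiableAt_id.prodMk (differentiableAt_const _))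
  have hy : DifferentiableAt ℝ (fun y => F (z.fst, y)) z.snd :=
    hF.comp z.snd ((differentiableAt_const _).prodMk differentiableAt_id)
  have h₁ := (hcvx _ hzY).inner_gradient_le hzX huX hx.hasGradientAt
  have h₂ := (hccv _ hzX).inner_gradient_ge hzY huY hy.hasGradientAt
  have hinner : ⟪saddleOp F z, z - u⟫ =
      ⟪gradient (fun x => F (x, z.snd)) z.fst, z.fst - u.fst⟫ -
        ⟪gradient (fun y => F (z.fst, y)) z.snd, z.snd - u.snd⟫ := by
    simp [saddleOp, WithLp.prod_inner_apply, inner_neg_left, sub_eq_add_neg]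
  rw [← neg_sub z.fst, inner_neg_right] at h₁
  rw [← neg_sub z.snd, inner_neg_right] at h₂
  rw [hinner, saddleGap]
  linarith

omit [CompleteSpace E] [CompleteSpace E'] in
lemma saddleGap_sum_smul_le (hcvx : ∀ y ∈ Y, ConvexOn ℝ X (fun x => F (x, y)))
    (hccv : ∀ x ∈ X, ConcaveOn ℝ Y (fun y => F (x, y))) {ι : Type*} {s : Finset ι}
    {c : ι → ℝ} {w : ι → WithLp 2 (E × E')} (hc₀ : ∀ i ∈ s, 0 ≤ c i) (hc₁ : ∑ i ∈ s, c i = 1)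
    (hw : ∀ i ∈ s, w i ∈ prodSet X Y) {u : WithLp 2 (E × E')} (hu : u ∈ prodSet X Y) :
    saddleGap F (∑ i ∈ s, c i • w i) u ≤ ∑ i ∈ s, c i * saddleGap F (w i) u := by
  have hfst : (∑ i ∈ s, c i • w i).fst = ∑ i ∈ s, c i • (w i).fst :=
    map_sum (WithLp.fstₗ 2 ℝ E E') _ _ |>.trans (by simp)
  have hsnd : (∑ i ∈ s, c i • w i).snd = ∑ i ∈ s, c i • (w i).snd :=
    map_sum (WithLp.sndₗ 2 ℝ E E') _ _ |>.trans (by simp)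
  have hx := (hcvx u.snd hu.2).map_sum_le (p := fun i => (w i).fst) hc₀ hc₁
    fun i hi => (hw i hi).1
  have hy := (hccv u.fst hu.1).le_map_sum (p := fun i => (w i).snd) hc₀ hc₁
    fun i hi => (hw i hi).2
  simp only [saddleGap, hfst, hsnd, mul_sub, Finset.sum_sub_distrib]
  simp only [smul_eq_mul] at hx hy
  linarith

end Saddle

theorem extragradient_convergence_general
    (X : Set E) (Y : Set E')
    (hXcv : Convex ℝ X) (hYcv : Convex ℝ Y)
    (D : ℝ) (hXD : ∀ s₁ ∈ X, ∀ s₂ ∈ X, ‖s₁ - s₂‖ ≤ D) (hYD : ∀ s₁ ∈ Y, ∀ s₂ ∈ Y, ‖s₁ - s₂‖ ≤ D)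
    (F : E × E' → ℝ) (hFdiff : Differentiable ℝ F)
    (hcvx : ∀ y ∈ Y, ConvexOn ℝ X (fun x => F (x, y)))
    (hccv : ∀ x ∈ X, ConcaveOn ℝ Y (fun y => F (x, y)))
    (ℓ : ℝ) (hℓ : 0 < ℓ)
    (hlip : ∀ z₁ ∈ prodSet X Y, ∀ z₂ ∈ prodSet X Y,
      ‖saddleOp F z₁ - saddleOp F z₂‖ ≤ ℓ * ‖z₁ - z₂‖)
    (T : ℕ) (hT : 1 ≤ T) (α : ℝ) (hα : α = 1 / ℓ)
    (z w : ℕ → WithLp 2 (E × E')) (hz0 : z 0 ∈ prodSet X Y)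
    (hhalf : ∀ t < T, IsProjOn (prodSet X Y) (z t - α • saddleOp F (z t)) (w t))
    (hfull : ∀ t < T, IsProjOn (prodSet X Y) (z t - α • saddleOp F (w t)) (z (t + 1))) :
    ∀ x ∈ X, ∀ y ∈ Y,
      F ((WithLp.equiv 2 (E × E') ((T : ℝ)⁻¹ • ∑ t ∈ Finset.range T, w t)).1, y) -
        F (x, (WithLp.equiv 2 (E × E') ((T : ℝ)⁻¹ • ∑ t ∈ Finset.range T, w t)).2) ≤
      ℓ * D ^ 2 / T := by
  intro x hx y hy
  set u : WithLp 2 (E × E') := WithLp.toLp 2 (x, y)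
  have hu : u ∈ prodSet X Y := ⟨hx, hy⟩
  have hw : ∀ t ∈ Finset.range T, w t ∈ prodSet X Y :=
    fun t ht => (hhalf t (Finset.mem_range.mp ht)).1
  have hTpos : (0 : ℝ) < T := by exact_mod_cast hT
  have hαℓ : α * ℓ = 1 := by rw [hα]; field_simp
  have hsum := extragradient_sum_inner_le (convex_prodSet hXcv hYcv)
    (by rw [hα]; positivity) hαℓ.le hlip hz0 hhalf hfull hu
  have hdiam : ‖z 0 - u‖ ^ 2 ≤ 2 * D ^ 2 :=
    WithLp.prod_norm_sq_le_two_mul_sq (hXD _ hz0.1 x hx) (hYD _ hz0.2 y hy)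
  have hbound : ∑ t ∈ Finset.range T, ⟪saddleOp F (w t), w t - u⟫ ≤ ℓ * D ^ 2 :=
    calc ∑ t ∈ Finset.range T, ⟪saddleOp F (w t), w t - u⟫
        = ℓ * (α * ∑ t ∈ Finset.range T, ⟪saddleOp F (w t), w t - u⟫) := by
          rw [← mul_assoc, mul_comm ℓ α, hαℓ, one_mul]
      _ ≤ ℓ * D ^ 2 := by gcongr; linarith
  change saddleGap F ((T : ℝ)⁻¹ • ∑ t ∈ Finset.range T, w t) u ≤ _
  calc saddleGap F ((T : ℝ)⁻¹ • ∑ t ∈ Finset.range T, w t) u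
      ≤ ∑ t ∈ Finset.range T, (T : ℝ)⁻¹ * saddleGap F (w t) u := by
        rw [Finset.smul_sum]
        exact saddleGap_sum_smul_le hcvx hccv (fun _ _ => by positivity)
          (by simp [hTpos.ne']) hw hu
    _ ≤ ∑ t ∈ Finset.range T, (T : ℝ)⁻¹ * ⟪saddleOp F (w t), w t - u⟫ := by
        gcongr with t ht
        exact saddleGap_le_inner_saddleOp hcvx hccv (hFdiff _) (hw t ht) hu
    _ ≤ ℓ * D ^ 2 / T := by
        rw [← Finset.mul_sum, div_eq_inv_mul]
        gcongr

/-- Lemma B.6: `O(1/T)` convergence of Extragradient.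
With stepsize `α = 1/ℓ`, the Extragradient iterates
`z_{t+1/2} = Π_{X×Y}(z_t − α G(z_t))`, `z_{t+1} = Π_{X×Y}(z_t − α G(z_{t+1/2}))`
(half-iterates denoted `w t`) satisfy, for the average of the half-iterates,
`F(x̄_{T+1/2}, y) − F(x, ȳ_{T+1/2}) ≤ ℓD²/T` for every `(x,y) ∈ X × Y`. -/
theorem extragradient_convergence
    (X : Set E) (Y : Set E') (hXne : X.Nonempty) (hYne : Y.Nonempty)
    (hXcl : IsClosed X) (hYcl : IsClosed Y) (hXcv : Convex ℝ X) (hYcv : Convex ℝ Y)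
    (D : ℝ) (hXD : ∀ s₁ ∈ X, ∀ s₂ ∈ X, ‖s₁ - s₂‖ ≤ D) (hYD : ∀ s₁ ∈ Y, ∀ s₂ ∈ Y, ‖s₁ - s₂‖ ≤ D)
    (F : E × E' → ℝ) (hFdiff : Differentiable ℝ F)
    (hcvx : ∀ y ∈ Y, ConvexOn ℝ X (fun x => F (x, y)))
    (hccv : ∀ x ∈ X, ConcaveOn ℝ Y (fun y => F (x, y)))
    (ℓ : ℝ) (hℓ : 0 < ℓ)
    (hmono : ∀ z₁ ∈ prodSet X Y, ∀ z₂ ∈ prodSet X Y,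
      0 ≤ ⟪saddleOp F z₁ - saddleOp F z₂, z₁ - z₂⟫)
    (hlip : ∀ z₁ ∈ prodSet X Y, ∀ z₂ ∈ prodSet X Y,
      ‖saddleOp F z₁ - saddleOp F z₂‖ ≤ ℓ * ‖z₁ - z₂‖)
    (T : ℕ) (hT : 1 ≤ T) (α : ℝ) (hα : α = 1 / ℓ)
    (z w : ℕ → WithLp 2 (E × E')) (hz0 : z 0 ∈ prodSet X Y)
    (hhalf : ∀ t < T, IsProjOn (prodSet X Y) (z t - α • saddleOp F (z t)) (w t))
    (hfull : ∀ t < T, IsProjOn (prodSet X Y) (z t - α • saddleOp F (w t)) (z (t + 1))) :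
    ∀ x ∈ X, ∀ y ∈ Y,
      F ((WithLp.equiv 2 (E × E') ((T : ℝ)⁻¹ • ∑ t ∈ Finset.range T, w t)).1, y) -
        F (x, (WithLp.equiv 2 (E × E') ((T : ℝ)⁻¹ • ∑ t ∈ Finset.range T, w t)).2) ≤
      ℓ * D ^ 2 / T :=
  extragradient_convergence_general X Y hXcv hYcv D hXD hYD F hFdiff hcvx hccv ℓ hℓ hlip T hT α hα z
    w hz0 hhalf hfull
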